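/- arXiv:1203.6023 — 5 statements merged into one kernel-verified Lean document; each statement's English description precedes it below -/
import Mathlib

section
/- If (s0, s1, s2, s3) satisfies the 3-R̂(RRR)ER̂ system, then (s3, −s2, s1, −s0) also satisfies the system. -/
/-- The 3-R̂(RRR)ER̂ spherical parallel manipulator system. -/
def SPMSystem (A1 A2 A3 B1 B2 B3 q0 q1 q2 q3 : ℝ) : Prop :=
  A1 * (q0^2 - q1^2 - q2^2 + q3^2) + 2 * B1 * (q2 * q3 - q0 * q1) = 0 ∧
  A2 * (q0^2 - q1^2 + q2^2 - q3^2) + 2 * B2 * (q1 * q2 - q0 * q3) = 0 ∧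
  A3 * (q0^2 + q1^2 - q2^2 - q3^2) + 2 * B3 * (q1 * q3 - q0 * q2) = 0 ∧
  q0^2 + q1^2 + q2^2 + q3^2 - 1 = 0

theorem stmt_2 (A1 A2 A3 B1 B2 B3 s0 s1 s2 s3 : ℝ)
    (h : SPMSystem A1 A2 A3 B1 B2 B3 s0 s1 s2 s3) :
    SPMSystem A1 A2 A3 B1 B2 B3 s3 (-s2) s1 (-s0) := by
  obtain ⟨h1, h2, h3, h4⟩ := h
  -- The substitution fixes f1 and f4 and negates f2 and f3 as polynomials.
  exact ⟨by linear_combination h1, by linear_combination -h2,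
    by linear_combination -h3, by linear_combination h4⟩
end

section
/- For any real parameters A1, A2, A3, B1, B2, B3, the eight points (±1/2, ±1/2, ±1/2, ±1/2) with an even number of minus signs in coordinates 1–3 relative to coordinate 0 — namely ±(1/2,1/2,1/2,1/2), ±(1/2,−1/2,−1/2,1/2), ±(1/2,1/2,−1/2,−1/2), ±(1/2,−1/2,1/2,−1/2) — are eight distinct solutions of the 3-R̂(RRR)ER̂ system. -/
theorem stmt_5 (A1 A2 A3 B1 B2 B3 : ℝ)
    (p : Fin 8 → ℝ × ℝ × ℝ × ℝ)
    (hp : p = ![(1/2, 1/2, 1/2, 1/2), (1/2, -1/2, -1/2, 1/2),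
      (1/2, 1/2, -1/2, -1/2), (1/2, -1/2, 1/2, -1/2),
      (-1/2, -1/2, -1/2, -1/2), (-1/2, 1/2, 1/2, -1/2),
      (-1/2, -1/2, 1/2, 1/2), (-1/2, 1/2, -1/2, 1/2)]) :
    (∀ i, SPMSystem A1 A2 A3 B1 B2 B3 (p i).1 (p i).2.1 (p i).2.2.1 (p i).2.2.2) ∧
      Function.Injective p := by
  subst hp
  refine ⟨?_, ?_⟩
  · intro i
    fin_cases i <;>
      exact ⟨by norm_num <;> ring, by norm_num <;> ring, by norm_num <;> ring, by norm_num⟩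
  · intro i j h
    fin_cases i <;> fin_cases j <;>
      first
        | rfl
        | (exfalso;
           simp only [Matrix.cons_val_zero, Matrix.cons_val_one, Matrix.head_cons,
             Matrix.cons_val_succ, Prod.mk.injEq] at h;
           norm_num at h)
end

section
/- If (s0, s1, s2, s3) is a solution of the 3-R̂(RRR)ER̂ system with s0 ∉ {1/2, −1/2}, then the orbit {±(s0,s1,s2,s3), ±(s1,−s0,−s3,s2), ±(s2,s3,−s0,−s1), ±(s3,−s2,s1,−s0)} consists of solutions of the system. -/
/-!
Read (q0, q1, q2, q3) as the quaternion q = q0 + q1 i + q2 j + q3 k. The orbit in question is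
{q u | u = ±1, ±i, ±j, ±k}, and right multiplication by a unit u only permutes and negates the
coordinates in such a way that each of the four equations is either preserved or negated.
-/

namespace SPMSystem

variable {A1 A2 A3 B1 B2 B3 q0 q1 q2 q3 : ℝ}

theorem neg (h : SPMSystem A1 A2 A3 B1 B2 B3 q0 q1 q2 q3) :
    SPMSystem A1 A2 A3 B1 B2 B3 (-q0) (-q1) (-q2) (-q3) := by
  obtain ⟨h1, h2, h3, h4⟩ := h
  exact ⟨by linear_combination h1, by linear_combination h2, by linear_combination h3,
    by linear_combination h4⟩

theorem mul_i (h : SPMSystem A1 A2 A3 B1 B2 B3 q0 q1 q2 q3) :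
    SPMSystem A1 A2 A3 B1 B2 B3 (-q1) q0 q3 (-q2) := by
  obtain ⟨h1, h2, h3, h4⟩ := h
  exact ⟨by linear_combination -h1, by linear_combination -h2, by linear_combination h3,
    by linear_combination h4⟩

theorem mul_j (h : SPMSystem A1 A2 A3 B1 B2 B3 q0 q1 q2 q3) :
    SPMSystem A1 A2 A3 B1 B2 B3 (-q2) (-q3) q0 q1 := by
  obtain ⟨h1, h2, h3, h4⟩ := h
  exact ⟨by linear_combination -h1, by linear_combination h2, by linear_combination -h3,
    by linear_combination h4⟩

theorem mul_k (h : SPMSystem A1 A2 A3 B1 B2 B3 q0 q1 q2 q3) :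
    SPMSystem A1 A2 A3 B1 B2 B3 (-q3) q2 (-q1) q0 := by
  obtain ⟨h1, h2, h3, h4⟩ := h
  exact ⟨by linear_combination h1, by linear_combination -h2, by linear_combination -h3,
    by linear_combination h4⟩

end SPMSystem

theorem stmt_6_general (A1 A2 A3 B1 B2 B3 s0 s1 s2 s3 : ℝ)
    (h : SPMSystem A1 A2 A3 B1 B2 B3 s0 s1 s2 s3) :
    SPMSystem A1 A2 A3 B1 B2 B3 s0 s1 s2 s3 ∧
    SPMSystem A1 A2 A3 B1 B2 B3 (-s0) (-s1) (-s2) (-s3) ∧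
    SPMSystem A1 A2 A3 B1 B2 B3 s1 (-s0) (-s3) s2 ∧
    SPMSystem A1 A2 A3 B1 B2 B3 (-s1) s0 s3 (-s2) ∧
    SPMSystem A1 A2 A3 B1 B2 B3 s2 s3 (-s0) (-s1) ∧
    SPMSystem A1 A2 A3 B1 B2 B3 (-s2) (-s3) s0 s1 ∧
    SPMSystem A1 A2 A3 B1 B2 B3 s3 (-s2) s1 (-s0) ∧
    SPMSystem A1 A2 A3 B1 B2 B3 (-s3) s2 (-s1) s0 :=
  ⟨h, h.neg, by simpa only [neg_neg] using h.mul_i.neg, h.mul_i,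
    by simpa only [neg_neg] using h.mul_j.neg, h.mul_j,
    by simpa only [neg_neg] using h.mul_k.neg, h.mul_k⟩

theorem stmt_6 (A1 A2 A3 B1 B2 B3 s0 s1 s2 s3 : ℝ)
    (h : SPMSystem A1 A2 A3 B1 B2 B3 s0 s1 s2 s3)
    (h0 : s0 ≠ 1/2) (h0' : s0 ≠ -(1/2)) :
    SPMSystem A1 A2 A3 B1 B2 B3 s0 s1 s2 s3 ∧
    SPMSystem A1 A2 A3 B1 B2 B3 (-s0) (-s1) (-s2) (-s3) ∧
    SPMSystem A1 A2 A3 B1 B2 B3 s1 (-s0) (-s3) s2 ∧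
    SPMSystem A1 A2 A3 B1 B2 B3 (-s1) s0 s3 (-s2) ∧
    SPMSystem A1 A2 A3 B1 B2 B3 s2 s3 (-s0) (-s1) ∧
    SPMSystem A1 A2 A3 B1 B2 B3 (-s2) (-s3) s0 s1 ∧
    SPMSystem A1 A2 A3 B1 B2 B3 s3 (-s2) s1 (-s0) ∧
    SPMSystem A1 A2 A3 B1 B2 B3 (-s3) s2 (-s1) s0 :=
  stmt_6_general A1 A2 A3 B1 B2 B3 s0 s1 s2 s3 h
end

section
/- With notation as in the Dixon construction, each coefficient polynomial ψ_{ijk}(x1,x2,x3) of det U (expanded in powers of y1,y2,y3) vanishes at every common zero (s1,s2,s3) ∈ ℝ³ of f1, f2, f3, f4. -/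
/-!
Substitute the common zero `s` for the `x`-variables and keep the `y`-variables. By the defining
relations of the divided differences, row `i` of the specialised Dixon matrix, paired with
`(s₁ - y₁, s₂ - y₂, s₃ - y₃, 1)`, telescopes to `f_i(s) = 0`. This vector is nonzero, so the
specialised determinant vanishes in the domain `ℝ[y₁, y₂, y₃]`; its `y`-coefficients are exactly
the `ψ_{ijk}(s)`.
-/

open MvPolynomial

/-- Separate the six variables into outer `y`-variables (indices 3,4,5) and
inner `x`-variables (indices 0,1,2). -/
noncomputable def sepVars :
    MvPolynomial (Fin 6) ℝ ≃ₐ[ℝ] MvPolynomial (Fin 3) (MvPolynomial (Fin 3) ℝ) :=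
  (renameEquiv ℝ (finSumFinEquiv (m := 3) (n := 3)).symm).trans
    ((renameEquiv ℝ (Equiv.sumComm (Fin 3) (Fin 3))).trans
      (sumAlgEquiv ℝ (Fin 3) (Fin 3)))

theorem Matrix.det_eq_zero_of_sum_mul_add_last_eq_zero {B : Type*} [CommRing B] [IsDomain B]
    {n : ℕ} (M : Matrix (Fin (n + 1)) (Fin (n + 1)) B) (t : Fin n → B)
    (hrow : ∀ i, ∑ j, M i (Fin.castSucc j) * t j + M i (Fin.last n) = 0) : M.det = 0 := by
  refine Matrix.exists_mulVec_eq_zero_iff.mp ⟨Fin.snoc t 1, fun h => ?_, ?_⟩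
  · simpa using congrFun h (Fin.last n)
  · funext i
    simpa [Matrix.mulVec, dotProduct, Fin.sum_univ_castSucc] using hrow i

lemma sepVars_X_castAdd (i : Fin 3) : sepVars (X (Fin.castAdd 3 i)) = C (X i) := by
  simp only [sepVars, AlgEquiv.trans_apply, renameEquiv_apply, rename_X,
    finSumFinEquiv_symm_apply_castAdd, Equiv.sumComm_apply, Sum.swap_inl, sumAlgEquiv_X_inr]

lemma sepVars_X_natAdd (i : Fin 3) : sepVars (X (Fin.natAdd 3 i)) = X i := by
  simp only [sepVars, AlgEquiv.trans_apply, renameEquiv_apply, rename_X,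
    finSumFinEquiv_symm_apply_natAdd, Equiv.sumComm_apply, Sum.swap_inr, sumAlgEquiv_X_inl]

noncomputable def evalInner (s : Fin 3 → ℝ) :
    MvPolynomial (Fin 6) ℝ →ₐ[ℝ] MvPolynomial (Fin 3) ℝ :=
  aeval ![C (s 0), C (s 1), C (s 2), X 0, X 1, X 2]

lemma evalInner_X (s : Fin 3 → ℝ) (i : Fin 6) :
    evalInner s (X i) = ![C (s 0), C (s 1), C (s 2), X 0, X 1, X 2] i :=
  aeval_X _ _

lemma map_eval_sepVars (s : Fin 3 → ℝ) (p : MvPolynomial (Fin 6) ℝ) :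
    map (eval s) (sepVars p) = evalInner s p := by
  change (mapAlgHom (aeval s)).comp sepVars.toAlgHom p = _
  congr 1
  refine algHom_ext fun (i : Fin (3 + 3)) => Fin.addCases (fun j => ?_) (fun j => ?_) i
  · simp only [AlgHom.comp_apply, AlgEquiv.coe_toAlgHom, sepVars_X_castAdd]
    fin_cases j <;> simp [evalInner]
  · simp only [AlgHom.comp_apply, AlgEquiv.coe_toAlgHom, sepVars_X_natAdd]
    fin_cases j <;> simp [evalInner]

lemma eval_coeff_sepVars (s : Fin 3 → ℝ) (p : MvPolynomial (Fin 6) ℝ) (d : Fin 3 →₀ ℕ) :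
    eval s (coeff d (sepVars p)) = coeff d (evalInner s p) := by
  rw [← map_eval_sepVars, coeff_map]

lemma evalInner_aeval_inner (s : Fin 3 → ℝ) (q : MvPolynomial (Fin 3) ℝ) :
    evalInner s (aeval ![(X 0 : MvPolynomial (Fin 6) ℝ), X 1, X 2] q) = C (eval s q) := by
  rw [comp_aeval_apply]
  convert aeval_C_comp_left s q using 3
  · funext j
    fin_cases j <;> simp [evalInner]
  · rfl

theorem stmt_12_general
    (f : Fin 4 → MvPolynomial (Fin 3) ℝ)
    (h : Fin 4 → Fin 3 → MvPolynomial (Fin 6) ℝ)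
    (hh0 : ∀ i, h i 0 * (X 0 - X 3) =
      aeval ![(X 0 : MvPolynomial (Fin 6) ℝ), X 1, X 2] (f i) -
        aeval ![(X 3 : MvPolynomial (Fin 6) ℝ), X 1, X 2] (f i))
    (hh1 : ∀ i, h i 1 * (X 1 - X 4) =
      aeval ![(X 3 : MvPolynomial (Fin 6) ℝ), X 1, X 2] (f i) -
        aeval ![(X 3 : MvPolynomial (Fin 6) ℝ), X 4, X 2] (f i))
    (hh2 : ∀ i, h i 2 * (X 2 - X 5) =
      aeval ![(X 3 : MvPolynomial (Fin 6) ℝ), X 4, X 2] (f i) -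
        aeval ![(X 3 : MvPolynomial (Fin 6) ℝ), X 4, X 5] (f i))
    (U : Matrix (Fin 4) (Fin 4) (MvPolynomial (Fin 6) ℝ))
    (hU : ∀ i, U i = ![h i 0, h i 1, h i 2,
      aeval ![(X 3 : MvPolynomial (Fin 6) ℝ), X 4, X 5] (f i)])
    (ψ : (Fin 3 →₀ ℕ) → MvPolynomial (Fin 3) ℝ)
    (hψ : ∀ d, ψ d = coeff d (sepVars U.det))
    (s : Fin 3 → ℝ) (hs : ∀ i, eval s (f i) = 0) :
    ∀ d, eval s (ψ d) = 0 := by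
  have hdet : (U.map (evalInner s)).det = 0 := by
    refine Matrix.det_eq_zero_of_sum_mul_add_last_eq_zero _ (fun j => C (s j) - X j) fun i => ?_
    have e0 := congrArg (evalInner s) (hh0 i)
    have e1 := congrArg (evalInner s) (hh1 i)
    have e2 := congrArg (evalInner s) (hh2 i)
    simp only [map_mul, map_sub] at e0 e1 e2
    rw [evalInner_aeval_inner, hs i, C_0] at e0
    simp only [evalInner_X, Matrix.cons_val] at e0 e1 e2
    simp only [Matrix.map_apply, hU i, Fin.sum_univ_three, Fin.castSucc_zero, Fin.castSucc_one,
      Fin.reduceCastSucc, Fin.reduceLast, Matrix.cons_val]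
    linear_combination e0 + e1 + e2
  intro d
  rw [hψ, eval_coeff_sepVars, AlgHom.map_det, AlgHom.mapMatrix_apply, hdet, coeff_zero]

/-- Each coefficient polynomial `ψ d` of `det U` vanishes at every common
zero of `f1, f2, f3, f4`. -/
theorem stmt_12
    (f : Fin 4 → MvPolynomial (Fin 3) ℝ)
    (hdeg : ∀ i, (f i).totalDegree ≤ 2)
    (h : Fin 4 → Fin 3 → MvPolynomial (Fin 6) ℝ)
    (hh0 : ∀ i, h i 0 * (X 0 - X 3) =
      aeval ![(X 0 : MvPolynomial (Fin 6) ℝ), X 1, X 2] (f i) -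
        aeval ![(X 3 : MvPolynomial (Fin 6) ℝ), X 1, X 2] (f i))
    (hh1 : ∀ i, h i 1 * (X 1 - X 4) =
      aeval ![(X 3 : MvPolynomial (Fin 6) ℝ), X 1, X 2] (f i) -
        aeval ![(X 3 : MvPolynomial (Fin 6) ℝ), X 4, X 2] (f i))
    (hh2 : ∀ i, h i 2 * (X 2 - X 5) =
      aeval ![(X 3 : MvPolynomial (Fin 6) ℝ), X 4, X 2] (f i) -
        aeval ![(X 3 : MvPolynomial (Fin 6) ℝ), X 4, X 5] (f i))
    (U : Matrix (Fin 4) (Fin 4) (MvPolynomial (Fin 6) ℝ))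
    (hU : ∀ i, U i = ![h i 0, h i 1, h i 2,
      aeval ![(X 3 : MvPolynomial (Fin 6) ℝ), X 4, X 5] (f i)])
    (ψ : (Fin 3 →₀ ℕ) → MvPolynomial (Fin 3) ℝ)
    (hψ : ∀ d, ψ d = coeff d (sepVars U.det))
    (s : Fin 3 → ℝ) (hs : ∀ i, eval s (f i) = 0) :
    ∀ d, eval s (ψ d) = 0 :=
  stmt_12_general f h hh0 hh1 hh2 U hU ψ hψ s hs
end

section
/- Let f1, f2, f3, f4 ∈ ℝ[q0, q1, q2, q3] be quadrics in four unknowns. Regard q0 as a parameter and form the Dixon matrix D(q0) = Dix(f1,f2,f3,f4; q1,q2,q3) over ℝ[q0]. If (s0,s1,s2,s3) is a common zero of f1,...,f4, then the univariate polynomial det D(q0) ∈ ℝ[q0] vanishes at q0 = s0. -/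
/-!
Evaluate the Dixon matrix at `q0 = s0` and apply it to the vector of the twenty monomials of
degree `≤ 3` evaluated at `(s1, s2, s3)`. Since every row polynomial has degree `≤ 3` in
`q1, q2, q3`, the result is the vector of values of the row polynomials at `s`, and these all
vanish: the rows `fᵢ` and `qⱼ fᵢ` because `s` is a common zero, and the rows `ψ_d` because
substituting `x = (s1, s2, s3)` into the divided-difference matrix `U(x, y)` gives a matrix with
the kernel vector `(x - y, 1)` (its rows telescope to `fᵢ(s) = 0`), so `det U(s, y) = 0`
identically in `y`. The monomial vector has entry `1` at the constant monomial, so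
`det D(s0) = 0`.

The degree bound for `ψ_d` is a degree count in `x`: dividing a difference of quadrics by
`xⱼ - yⱼ` leaves degree `≤ 1`, and the last column of `U` is free of `x`, so `det U` has degree
`≤ 3` in `x`.
-/

open MvPolynomial

/-- Separation of six variables over the coefficient ring `ℝ[q0]`:
outer `y`-variables (indices 3,4,5), inner `x`-variables (indices 0,1,2). -/
noncomputable def sepVarsP :
    MvPolynomial (Fin 6) (Polynomial ℝ) ≃ₐ[Polynomial ℝ]
      MvPolynomial (Fin 3) (MvPolynomial (Fin 3) (Polynomial ℝ)) :=
  (renameEquiv (Polynomial ℝ) (finSumFinEquiv (m := 3) (n := 3)).symm).trans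
    ((renameEquiv (Polynomial ℝ) (Equiv.sumComm (Fin 3) (Fin 3))).trans
      (sumAlgEquiv (Polynomial ℝ) (Fin 3) (Fin 3)))

namespace MvPolynomial

variable {R σ : Type*}

section CommSemiring

variable [CommSemiring R]

theorem coeff_coeff_commAlgEquiv {S₁ S₂ : Type*} (Q : MvPolynomial S₁ (MvPolynomial S₂ R))
    (a : S₁ →₀ ℕ) (b : S₂ →₀ ℕ) :
    coeff a (coeff b (commAlgEquiv R S₁ S₂ Q)) = coeff b (coeff a Q) := by
  classical
  induction Q using MvPolynomial.induction_on' with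
  | add P Q hP hQ => simp only [map_add, coeff_add, hP, hQ]
  | monomial m p =>
    induction p using MvPolynomial.induction_on' with
    | add p q hp hq => simp only [map_add, coeff_add, hp, hq]
    | monomial n r =>
      rw [show commAlgEquiv R S₁ S₂ (monomial m (monomial n r)) = monomial n (monomial m r) from
        AddMonoidAlgebra.commAlgEquiv_single_single m n r]
      simp only [coeff_monomial]
      by_cases hm : m = a <;> by_cases hn : n = b <;> simp [hm, hn]

theorem totalDegree_coeff_le_totalDegree_commAlgEquiv {S₁ S₂ : Type*}
    (Q : MvPolynomial S₁ (MvPolynomial S₂ R)) (b : S₁ →₀ ℕ) :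
    (coeff b Q).totalDegree ≤ (commAlgEquiv R S₁ S₂ Q).totalDegree :=
  Finset.sup_le fun m hm => le_totalDegree <| by
    rw [mem_support_iff, ← coeff_coeff_commAlgEquiv] at hm
    exact mem_support_iff.mpr fun h => hm (by rw [h, coeff_zero])

theorem totalDegree_aeval_le {τ A : Type*} [CommSemiring A] [Algebra R A] [Fintype σ]
    {u : σ → MvPolynomial τ A} {c : ℕ} (hu : ∀ i, (u i).totalDegree ≤ c) (p : MvPolynomial σ R) :
    (aeval u p).totalDegree ≤ c * p.totalDegree := by
  rw [aeval_def, eval₂_eq']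
  refine totalDegree_finsetSum_le fun d hd => ?_
  have hdeg : ∑ i, d i ≤ p.totalDegree := by
    simpa [Finsupp.sum_fintype] using le_totalDegree hd
  calc (algebraMap R (MvPolynomial τ A) (coeff d p) * ∏ i, u i ^ d i).totalDegree
      ≤ (algebraMap R (MvPolynomial τ A) (coeff d p)).totalDegree + (∏ i, u i ^ d i).totalDegree :=
        totalDegree_mul _ _
    _ ≤ 0 + ∑ i, c * d i := by
        gcongr
        · rw [algebraMap_apply, totalDegree_C]
        · refine (totalDegree_finsetProd _ _).trans (Finset.sum_le_sum fun i _ => ?_)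
          exact (totalDegree_pow _ _).trans (by rw [mul_comm]; gcongr; exact hu i)
    _ = c * ∑ i, d i := by rw [zero_add, Finset.mul_sum]
    _ ≤ c * p.totalDegree := Nat.mul_le_mul_left c hdeg

theorem eval₂_eq_sum_of_support_subset_range {S κ : Type*} [CommSemiring S] [Fintype σ]
    [Fintype κ] (φ : R →+* S) (x : σ → S) {M : κ → σ →₀ ℕ} (hM : Function.Injective M)
    {p : MvPolynomial σ R} (hp : ∀ d ∈ p.support, d ∈ Set.range M) :
    eval₂ φ x p = ∑ j, φ (coeff (M j) p) * ∏ i, x i ^ M j i := by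
  classical
  rw [eval₂_eq', ← Finset.sum_image (g := M) (f := fun d => φ (coeff d p) * ∏ i, x i ^ d i)
    fun j _ k _ h => hM h]
  refine Finset.sum_subset (fun d hd => ?_) (fun d _ hd => ?_)
  · obtain ⟨j, rfl⟩ := hp d hd
    exact Finset.mem_image_of_mem _ (Finset.mem_univ j)
  · rw [notMem_support_iff.mp hd, map_zero, zero_mul]

end CommSemiring

section CommRing

variable [CommRing R]

theorem totalDegree_le_of_totalDegree_mul_X_sub_C_le [IsDomain R] {p : MvPolynomial σ R}
    {a : σ} {c : R} {n : ℕ} (h : (p * (X a - C c)).totalDegree ≤ n + 1) :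
    p.totalDegree ≤ n := by
  classical
  rcases eq_or_ne p 0 with rfl | hp
  · simp
  have hmem : Finsupp.single a 1 ∈ (X a - C c : MvPolynomial σ R).support := by
    rw [mem_support_iff, coeff_sub, coeff_X, coeff_C,
      if_pos rfl, if_neg (Finsupp.single_ne_zero.mpr one_ne_zero).symm, sub_zero]
    exact one_ne_zero (α := R)
  have hne : (X a - C c : MvPolynomial σ R) ≠ 0 := fun h0 => by simp [h0] at hmem
  have hlin : 1 ≤ (X a - C c : MvPolynomial σ R).totalDegree := by
    simpa using le_totalDegree hmem
  rw [totalDegree_mul_of_isDomain hp hne] at h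
  omega

theorem totalDegree_det_le {n : Type*} [Fintype n] [DecidableEq n]
    (A : Matrix n n (MvPolynomial σ R)) (c : n → ℕ) (h : ∀ i j, (A i j).totalDegree ≤ c j) :
    A.det.totalDegree ≤ ∑ j, c j := by
  rw [Matrix.det_apply]
  refine totalDegree_finsetSum_le fun π _ => ?_
  have hprod : (∏ j, A (π j) j).totalDegree ≤ ∑ j, c j :=
    (totalDegree_finsetProd _ _).trans (Finset.sum_le_sum fun j _ => h _ _)
  rcases Int.units_eq_one_or (Equiv.Perm.sign π) with hs | hs <;> rw [hs]
  · rwa [one_smul]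
  · rwa [Units.neg_smul, one_smul, totalDegree_neg]

end CommRing

end MvPolynomial

open scoped Matrix

theorem forall_dixonRows {S : Type*} [CommSemiring S] {P : MvPolynomial (Fin 3) S → Prop}
    {F : Fin 4 → MvPolynomial (Fin 3) S} {ψ : (Fin 3 →₀ ℕ) → MvPolynomial (Fin 3) S}
    (hF : ∀ i, P (F i)) (hXF : ∀ k i, P (X k * F i)) (hψ : ∀ d, P (ψ d)) :
    ∀ i, P (![F 0, F 1, F 2, F 3,
      X 0 * F 0, X 0 * F 1, X 0 * F 2, X 0 * F 3,
      X 1 * F 0, X 1 * F 1, X 1 * F 2, X 1 * F 3,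
      X 2 * F 0, X 2 * F 1, X 2 * F 2, X 2 * F 3,
      ψ 0, ψ (Finsupp.single 0 1), ψ (Finsupp.single 1 1), ψ (Finsupp.single 2 1)] i) := by
  intro i
  fin_cases i <;> first | exact hF _ | exact hXF _ _ | exact hψ _

theorem sepVarsP_X_castAdd (k : Fin 3) : sepVarsP (X (Fin.castAdd 3 k)) = C (X k) := by
  simp only [sepVarsP, AlgEquiv.trans_apply, renameEquiv_apply, rename_X,
    finSumFinEquiv_symm_apply_castAdd, Equiv.sumComm_apply, Sum.swap_inl, sumAlgEquiv_X_inr]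

theorem sepVarsP_X_natAdd (k : Fin 3) : sepVarsP (X (Fin.natAdd 3 k)) = X k := by
  simp only [sepVarsP, AlgEquiv.trans_apply, renameEquiv_apply, rename_X,
    finSumFinEquiv_symm_apply_natAdd, Equiv.sumComm_apply, Sum.swap_inr, sumAlgEquiv_X_inl]

theorem sepVarsP_rename_castAdd (p : MvPolynomial (Fin 3) (Polynomial ℝ)) :
    sepVarsP (rename (Fin.castAdd 3) p) = C p := by
  have : sepVarsP.toAlgHom.comp (rename (Fin.castAdd 3)) =
      IsScalarTower.toAlgHom _ (MvPolynomial (Fin 3) (Polynomial ℝ)) _ :=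
    algHom_ext fun k => by simp [sepVarsP_X_castAdd]
  exact DFunLike.congr_fun this p

-- With the `x`-variables outer, `totalDegree` of the image is the degree in `x`.
noncomputable def sepVarsX :
    MvPolynomial (Fin 6) (Polynomial ℝ) ≃ₐ[Polynomial ℝ]
      MvPolynomial (Fin 3) (MvPolynomial (Fin 3) (Polynomial ℝ)) :=
  sepVarsP.trans (commAlgEquiv _ _ _)

theorem sepVarsX_X_castAdd (k : Fin 3) : sepVarsX (X (Fin.castAdd 3 k)) = X k := by
  rw [sepVarsX, AlgEquiv.trans_apply, sepVarsP_X_castAdd, commAlgEquiv_C_X]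

theorem sepVarsX_X_natAdd (k : Fin 3) : sepVarsX (X (Fin.natAdd 3 k)) = C (X k) := by
  rw [sepVarsX, AlgEquiv.trans_apply, sepVarsP_X_natAdd, commAlgEquiv_X]

theorem totalDegree_sepVarsX_X_natAdd (k : Fin 3) :
    (sepVarsX (X (Fin.natAdd 3 k))).totalDegree = 0 := by
  rw [sepVarsX_X_natAdd, totalDegree_C]

theorem totalDegree_sepVarsX_X_le (i : Fin 6) : (sepVarsX (X i)).totalDegree ≤ 1 := by
  refine Fin.addCases (m := 3) (n := 3) (fun k => ?_) (fun k => ?_) i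
  · rw [sepVarsX_X_castAdd, totalDegree_X]
  · rw [totalDegree_sepVarsX_X_natAdd]; exact zero_le_one

theorem totalDegree_sepVarsX_aeval_le {v : Fin 3 → MvPolynomial (Fin 6) (Polynomial ℝ)} {c : ℕ}
    (hv : ∀ j, (sepVarsX (v j)).totalDegree ≤ c) (p : MvPolynomial (Fin 3) (Polynomial ℝ)) :
    (sepVarsX (aeval v p)).totalDegree ≤ c * p.totalDegree := by
  rw [← AlgEquiv.coe_toAlgHom, ← AlgHom.comp_apply, comp_aeval]
  exact totalDegree_aeval_le hv p

theorem totalDegree_sepVarsX_le_of_mul_sub {q P Q : MvPolynomial (Fin 6) (Polynomial ℝ)}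
    {k : Fin 3} (hq : q * (X (Fin.castAdd 3 k) - X (Fin.natAdd 3 k)) = P - Q)
    (hP : (sepVarsX P).totalDegree ≤ 2) (hQ : (sepVarsX Q).totalDegree ≤ 2) :
    (sepVarsX q).totalDegree ≤ 1 := by
  have := congrArg sepVarsX hq
  rw [map_mul, map_sub, map_sub, sepVarsX_X_castAdd, sepVarsX_X_natAdd] at this
  exact totalDegree_le_of_totalDegree_mul_X_sub_C_le
    (this ▸ (totalDegree_sub _ _).trans (max_le hP hQ))

theorem totalDegree_coeff_sepVarsP_det_le
    {F : Fin 4 → MvPolynomial (Fin 3) (Polynomial ℝ)} (hF : ∀ i, (F i).totalDegree ≤ 2)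
    {h : Fin 4 → Fin 3 → MvPolynomial (Fin 6) (Polynomial ℝ)}
    (hh0 : ∀ i, h i 0 * (X 0 - X 3) =
      aeval ![(X 0 : MvPolynomial (Fin 6) (Polynomial ℝ)), X 1, X 2] (F i) -
        aeval ![(X 3 : MvPolynomial (Fin 6) (Polynomial ℝ)), X 1, X 2] (F i))
    (hh1 : ∀ i, h i 1 * (X 1 - X 4) =
      aeval ![(X 3 : MvPolynomial (Fin 6) (Polynomial ℝ)), X 1, X 2] (F i) -
        aeval ![(X 3 : MvPolynomial (Fin 6) (Polynomial ℝ)), X 4, X 2] (F i))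
    (hh2 : ∀ i, h i 2 * (X 2 - X 5) =
      aeval ![(X 3 : MvPolynomial (Fin 6) (Polynomial ℝ)), X 4, X 2] (F i) -
        aeval ![(X 3 : MvPolynomial (Fin 6) (Polynomial ℝ)), X 4, X 5] (F i))
    {U : Matrix (Fin 4) (Fin 4) (MvPolynomial (Fin 6) (Polynomial ℝ))}
    (hU : ∀ i, U i = ![h i 0, h i 1, h i 2,
      aeval ![(X 3 : MvPolynomial (Fin 6) (Polynomial ℝ)), X 4, X 5] (F i)])
    (d : Fin 3 →₀ ℕ) :
    (coeff d (sepVarsP U.det)).totalDegree ≤ 3 := by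
  have hquad : ∀ (a b c : Fin 6) i, (sepVarsX
      (aeval ![(X a : MvPolynomial (Fin 6) (Polynomial ℝ)), X b, X c] (F i))).totalDegree ≤ 2 :=
    fun a b c i => (totalDegree_sepVarsX_aeval_le
      (fun j => by fin_cases j <;> exact totalDegree_sepVarsX_X_le _) (F i)).trans
      (by rw [one_mul]; exact hF i)
  have hconst : ∀ i, (sepVarsX
      (aeval ![(X 3 : MvPolynomial (Fin 6) (Polynomial ℝ)), X 4, X 5] (F i))).totalDegree ≤ 0 :=
    fun i => (totalDegree_sepVarsX_aeval_le
      (fun j => by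
        fin_cases j
        exacts [(totalDegree_sepVarsX_X_natAdd 0).le, (totalDegree_sepVarsX_X_natAdd 1).le,
          (totalDegree_sepVarsX_X_natAdd 2).le]) (F i)).trans
      (by rw [zero_mul])
  have hdet : (sepVarsX U.det).totalDegree ≤ 3 := by
    rw [AlgEquiv.map_det (R := Polynomial ℝ)
      (S := MvPolynomial (Fin 6) (Polynomial ℝ))
      (T := MvPolynomial (Fin 3) (MvPolynomial (Fin 3) (Polynomial ℝ))) sepVarsX U]
    refine (totalDegree_det_le _ ![1, 1, 1, 0] fun i j => ?_).trans (by simp [Fin.sum_univ_four])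
    rw [AlgEquiv.mapMatrix_apply, Matrix.map_apply, hU i]
    fin_cases j
    · exact totalDegree_sepVarsX_le_of_mul_sub (k := 0) (hh0 i) (hquad 0 1 2 i) (hquad 3 1 2 i)
    · exact totalDegree_sepVarsX_le_of_mul_sub (k := 1) (hh1 i) (hquad 3 1 2 i) (hquad 3 4 2 i)
    · exact totalDegree_sepVarsX_le_of_mul_sub (k := 2) (hh2 i) (hquad 3 4 2 i) (hquad 3 4 5 i)
    · exact hconst i
  exact (totalDegree_coeff_le_totalDegree_commAlgEquiv _ d).trans hdet

noncomputable def evalAt (s : Fin 4 → ℝ) : MvPolynomial (Fin 3) (Polynomial ℝ) →+* ℝ :=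
  eval₂Hom (Polynomial.evalRingHom (s 0)) (s ∘ Fin.succ)

theorem evalAt_aeval (s : Fin 4 → ℝ) (f : MvPolynomial (Fin 4) ℝ) :
    evalAt s (aeval ![C Polynomial.X, X 0, X 1, X 2] f) = eval s f := by
  have hpt : (fun i => evalAt s (![C Polynomial.X, X 0, X 1, X 2] i)) = s :=
    funext fun i => by fin_cases i <;> simp [evalAt]
  rw [map_aeval, hpt, Subsingleton.elim ((evalAt s).comp _) (RingHom.id ℝ)]
  rfl

theorem map_evalAt_sepVarsP_det_eq_zero (s : Fin 4 → ℝ)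
    {F : Fin 4 → MvPolynomial (Fin 3) (Polynomial ℝ)} (hF : ∀ i, evalAt s (F i) = 0)
    {h : Fin 4 → Fin 3 → MvPolynomial (Fin 6) (Polynomial ℝ)}
    (hh0 : ∀ i, h i 0 * (X 0 - X 3) =
      aeval ![(X 0 : MvPolynomial (Fin 6) (Polynomial ℝ)), X 1, X 2] (F i) -
        aeval ![(X 3 : MvPolynomial (Fin 6) (Polynomial ℝ)), X 1, X 2] (F i))
    (hh1 : ∀ i, h i 1 * (X 1 - X 4) =
      aeval ![(X 3 : MvPolynomial (Fin 6) (Polynomial ℝ)), X 1, X 2] (F i) -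
        aeval ![(X 3 : MvPolynomial (Fin 6) (Polynomial ℝ)), X 4, X 2] (F i))
    (hh2 : ∀ i, h i 2 * (X 2 - X 5) =
      aeval ![(X 3 : MvPolynomial (Fin 6) (Polynomial ℝ)), X 4, X 2] (F i) -
        aeval ![(X 3 : MvPolynomial (Fin 6) (Polynomial ℝ)), X 4, X 5] (F i))
    {U : Matrix (Fin 4) (Fin 4) (MvPolynomial (Fin 6) (Polynomial ℝ))}
    (hU : ∀ i, U i = ![h i 0, h i 1, h i 2,
      aeval ![(X 3 : MvPolynomial (Fin 6) (Polynomial ℝ)), X 4, X 5] (F i)]) :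
    map (evalAt s) (sepVarsP U.det) = 0 := by
  set φ : MvPolynomial (Fin 6) (Polynomial ℝ) →+* MvPolynomial (Fin 3) ℝ :=
    (map (evalAt s)).comp (sepVarsP : MvPolynomial (Fin 6) (Polynomial ℝ) →+* _)
  set c : Fin 4 → MvPolynomial (Fin 6) (Polynomial ℝ) := ![X 0 - X 3, X 1 - X 4, X 2 - X 5, 1]
  have hx : (X ∘ Fin.castAdd 3 : Fin 3 → MvPolynomial (Fin 6) (Polynomial ℝ)) =
      ![X 0, X 1, X 2] := by
    funext j
    fin_cases j <;> rfl
  have htel : ∀ i, (U *ᵥ c) i = rename (Fin.castAdd 3) (F i) := by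
    intro i
    rw [rename_eq_aeval, hx]
    simp only [Matrix.mulVec, dotProduct, Fin.sum_univ_four, hU i, c, Matrix.cons_val_zero,
      Matrix.cons_val_one, Matrix.cons_val_two, Matrix.cons_val_three, Matrix.head_cons,
      Matrix.tail_cons]
    linear_combination hh0 i + hh1 i + hh2 i
  have hker : φ.mapMatrix U *ᵥ (φ ∘ c) = 0 := funext fun i => by
    rw [RingHom.mapMatrix_apply, ← RingHom.map_mulVec, htel]
    simp [φ, sepVarsP_rename_castAdd, hF]
  have hc : φ ∘ c ≠ 0 := fun h0 => by simpa [c] using congrFun h0 3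
  exact (RingHom.map_det φ U).trans (Matrix.exists_mulVec_eq_zero_iff.mp ⟨_, hc, hker⟩)

theorem stmt_14_general
    (f : Fin 4 → MvPolynomial (Fin 4) ℝ)
    (hdeg : ∀ i, (f i).totalDegree ≤ 2)
    -- `F i` is `f i` with `q0` pushed into the coefficient ring `ℝ[q0]`
    (F : Fin 4 → MvPolynomial (Fin 3) (Polynomial ℝ))
    (hF : ∀ i, F i = aeval ![C Polynomial.X, X 0, X 1, X 2] (f i))
    (h : Fin 4 → Fin 3 → MvPolynomial (Fin 6) (Polynomial ℝ))
    (hh0 : ∀ i, h i 0 * (X 0 - X 3) =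
      aeval ![(X 0 : MvPolynomial (Fin 6) (Polynomial ℝ)), X 1, X 2] (F i) -
        aeval ![(X 3 : MvPolynomial (Fin 6) (Polynomial ℝ)), X 1, X 2] (F i))
    (hh1 : ∀ i, h i 1 * (X 1 - X 4) =
      aeval ![(X 3 : MvPolynomial (Fin 6) (Polynomial ℝ)), X 1, X 2] (F i) -
        aeval ![(X 3 : MvPolynomial (Fin 6) (Polynomial ℝ)), X 4, X 2] (F i))
    (hh2 : ∀ i, h i 2 * (X 2 - X 5) =
      aeval ![(X 3 : MvPolynomial (Fin 6) (Polynomial ℝ)), X 4, X 2] (F i) -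
        aeval ![(X 3 : MvPolynomial (Fin 6) (Polynomial ℝ)), X 4, X 5] (F i))
    (U : Matrix (Fin 4) (Fin 4) (MvPolynomial (Fin 6) (Polynomial ℝ)))
    (hU : ∀ i, U i = ![h i 0, h i 1, h i 2,
      aeval ![(X 3 : MvPolynomial (Fin 6) (Polynomial ℝ)), X 4, X 5] (F i)])
    (ψ : (Fin 3 →₀ ℕ) → MvPolynomial (Fin 3) (Polynomial ℝ))
    (hψ : ∀ d, ψ d = coeff d (sepVarsP U.det))
    -- `M` enumerates the 20 monomials of degree at most 3 in `q1,q2,q3`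
    (M : Fin 20 → (Fin 3 →₀ ℕ))
    (hMinj : Function.Injective M)
    (hMall : ∀ d : Fin 3 →₀ ℕ, d.sum (fun _ n => n) ≤ 3 → ∃ j, M j = d)
    -- the twenty cubics
    (g : Fin 20 → MvPolynomial (Fin 3) (Polynomial ℝ))
    (hg : g = ![F 0, F 1, F 2, F 3,
      X 0 * F 0, X 0 * F 1, X 0 * F 2, X 0 * F 3,
      X 1 * F 0, X 1 * F 1, X 1 * F 2, X 1 * F 3,
      X 2 * F 0, X 2 * F 1, X 2 * F 2, X 2 * F 3,
      ψ 0, ψ (Finsupp.single 0 1), ψ (Finsupp.single 1 1), ψ (Finsupp.single 2 1)])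
    -- the Dixon matrix `Dix(f1,f2,f3,f4; q1,q2,q3)` with entries in `ℝ[q0]`
    (D : Matrix (Fin 20) (Fin 20) (Polynomial ℝ))
    (hD : ∀ i j, D i j = coeff (M j) (g i))
    (s : Fin 4 → ℝ) (hs : ∀ i, eval s (f i) = 0) :
    Polynomial.eval (s 0) D.det = 0 := by
  have hF2 : ∀ i, (F i).totalDegree ≤ 2 := fun i => by
    rw [hF i]
    refine (totalDegree_aeval_le (c := 1) (fun j => ?_) (f i)).trans
      (by rw [one_mul]; exact hdeg i)
    fin_cases j <;> simp [totalDegree_X]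
  have hg3 : ∀ i, (g i).totalDegree ≤ 3 := by
    rw [hg]
    exact forall_dixonRows (P := fun p => p.totalDegree ≤ 3)
      (fun i => (hF2 i).trans (by norm_num))
      (fun k i => (totalDegree_mul _ _).trans (by rw [totalDegree_X]; have := hF2 i; omega))
      (fun d => hψ d ▸ totalDegree_coeff_sepVarsP_det_le hF2 hh0 hh1 hh2 hU d)
  have hFs : ∀ i, evalAt s (F i) = 0 := fun i => by rw [hF i, evalAt_aeval, hs i]
  have hg0 : ∀ i, evalAt s (g i) = 0 := by
    rw [hg]
    exact forall_dixonRows (P := fun p => evalAt s p = 0) hFs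
      (fun k i => by rw [map_mul, hFs, mul_zero])
      (fun d => by rw [hψ, ← coeff_map, map_evalAt_sepVarsP_det_eq_zero s hFs hh0 hh1 hh2 hU,
        coeff_zero])
  -- `D(s 0)` annihilates the vector of the 20 monomials evaluated at `(s 1, s 2, s 3)`
  obtain ⟨j₀, hj₀⟩ := hMall 0 (by simp)
  rw [← Polynomial.coe_evalRingHom, RingHom.map_det]
  refine Matrix.exists_mulVec_eq_zero_iff.mp
    ⟨fun j => ∏ k, (s ∘ Fin.succ) k ^ M j k, fun hv => by simpa [hj₀] using congrFun hv j₀,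
      funext fun i => ?_⟩
  rw [Pi.zero_apply, ← hg0 i, evalAt, coe_eval₂Hom,
    eval₂_eq_sum_of_support_subset_range _ _ hMinj
      fun d hd => hMall d ((le_totalDegree hd).trans (hg3 i))]
  simp [Matrix.mulVec, dotProduct, hD]

/-- Four quadrics `f1,...,f4` in the unknowns `q0,q1,q2,q3`; regarding `q0` as a
parameter, `F i ∈ ℝ[q0][q1,q2,q3]` and the Dixon matrix `D` has entries in
`ℝ[q0]`.  If `(s0,s1,s2,s3)` is a common zero of the `f i`, then the univariate
polynomial `det D ∈ ℝ[q0]` vanishes at `s0`. -/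
theorem stmt_14
    (f : Fin 4 → MvPolynomial (Fin 4) ℝ)
    (hdeg : ∀ i, (f i).totalDegree ≤ 2)
    -- `F i` is `f i` with `q0` pushed into the coefficient ring `ℝ[q0]`
    (F : Fin 4 → MvPolynomial (Fin 3) (Polynomial ℝ))
    (hF : ∀ i, F i = aeval ![C Polynomial.X, X 0, X 1, X 2] (f i))
    (h : Fin 4 → Fin 3 → MvPolynomial (Fin 6) (Polynomial ℝ))
    (hh0 : ∀ i, h i 0 * (X 0 - X 3) =
      aeval ![(X 0 : MvPolynomial (Fin 6) (Polynomial ℝ)), X 1, X 2] (F i) -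
        aeval ![(X 3 : MvPolynomial (Fin 6) (Polynomial ℝ)), X 1, X 2] (F i))
    (hh1 : ∀ i, h i 1 * (X 1 - X 4) =
      aeval ![(X 3 : MvPolynomial (Fin 6) (Polynomial ℝ)), X 1, X 2] (F i) -
        aeval ![(X 3 : MvPolynomial (Fin 6) (Polynomial ℝ)), X 4, X 2] (F i))
    (hh2 : ∀ i, h i 2 * (X 2 - X 5) =
      aeval ![(X 3 : MvPolynomial (Fin 6) (Polynomial ℝ)), X 4, X 2] (F i) -
        aeval ![(X 3 : MvPolynomial (Fin 6) (Polynomial ℝ)), X 4, X 5] (F i))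
    (U : Matrix (Fin 4) (Fin 4) (MvPolynomial (Fin 6) (Polynomial ℝ)))
    (hU : ∀ i, U i = ![h i 0, h i 1, h i 2,
      aeval ![(X 3 : MvPolynomial (Fin 6) (Polynomial ℝ)), X 4, X 5] (F i)])
    (ψ : (Fin 3 →₀ ℕ) → MvPolynomial (Fin 3) (Polynomial ℝ))
    (hψ : ∀ d, ψ d = coeff d (sepVarsP U.det))
    -- `M` enumerates the 20 monomials of degree at most 3 in `q1,q2,q3`
    (M : Fin 20 → (Fin 3 →₀ ℕ))
    (hMinj : Function.Injective M)
    (hMdeg : ∀ j, (M j).sum (fun _ n => n) ≤ 3)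
    (hMall : ∀ d : Fin 3 →₀ ℕ, d.sum (fun _ n => n) ≤ 3 → ∃ j, M j = d)
    -- the twenty cubics
    (g : Fin 20 → MvPolynomial (Fin 3) (Polynomial ℝ))
    (hg : g = ![F 0, F 1, F 2, F 3,
      X 0 * F 0, X 0 * F 1, X 0 * F 2, X 0 * F 3,
      X 1 * F 0, X 1 * F 1, X 1 * F 2, X 1 * F 3,
      X 2 * F 0, X 2 * F 1, X 2 * F 2, X 2 * F 3,
      ψ 0, ψ (Finsupp.single 0 1), ψ (Finsupp.single 1 1), ψ (Finsupp.single 2 1)])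
    -- the Dixon matrix `Dix(f1,f2,f3,f4; q1,q2,q3)` with entries in `ℝ[q0]`
    (D : Matrix (Fin 20) (Fin 20) (Polynomial ℝ))
    (hD : ∀ i j, D i j = coeff (M j) (g i))
    (s : Fin 4 → ℝ) (hs : ∀ i, eval s (f i) = 0) :
    Polynomial.eval (s 0) D.det = 0 :=
  stmt_14_general f hdeg F hF h hh0 hh1 hh2 U hU ψ hψ M hMinj hMall g hg D hD s hs
end
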